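/- Let λ = (λ_1,…,λ_n) be a tuple of nonnegative integers (not necessarily weakly decreasing) such that λ_i = λ_{i+1} + 1 for some 1 ≤ i ≤ n−1, and let λ* be the tuple obtained from λ by replacing (λ_i, λ_{i+1}) with (λ_i − 1, λ_{i+1} + 1). Then P_{λ*}(x;t) = t · P_λ(x;t) in F. -/

import Mathlib

open MvPolynomial Finset

noncomputable section

abbrev R12 (n : ℕ) : Type := MvPolynomial (Option (Fin n)) ℚ

/-- The field of rational functions over `ℚ` in `t, x_1, …, x_n`
(the variable `none` is `t`, and `some i` is `x_{i+1}`). -/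
abbrev F12 (n : ℕ) : Type := FractionRing (R12 n)

def t12 (n : ℕ) : F12 n := algebraMap (R12 n) (F12 n) (X none)

def x12 (n : ℕ) (i : Fin n) : F12 n := algebraMap (R12 n) (F12 n) (X (some i))

/-- The action of `σ ∈ S_n` on `F12 n`, permuting `x_1, …, x_n` and fixing `t`. -/
def pact12 (n : ℕ) (σ : Equiv.Perm (Fin n)) : F12 n →+* F12 n :=
  IsFractionRing.lift
    (g := (algebraMap (R12 n) (F12 n)).comp (rename (Equiv.optionCongr σ)).toRingHom)
    (by
      rw [RingHom.coe_comp]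
      exact (IsFractionRing.injective (R12 n) (F12 n)).comp
        (rename_injective _ (Equiv.injective _)))

/-- The Hall–Littlewood polynomial
`P_λ(x;t) = Σ_σ σ(x^λ ∏_{i<j} (x_i - t x_j)/(x_i - x_j))`. -/
def HL12 (n : ℕ) (lam : Fin n → ℕ) : F12 n :=
  ∑ σ : Equiv.Perm (Fin n), pact12 n σ
    ((∏ i : Fin n, x12 n i ^ lam i) *
      ∏ i : Fin n, ∏ j ∈ Finset.Ioi i, (x12 n i - t12 n * x12 n j) / (x12 n i - x12 n j))

open Function

/-!
Let `λ_a = λ_b + 1` with `b = a + 1`, and write `x^λ = x^μ x_a`, `x^{λ*} = x^μ x_b`, where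
`μ_a = μ_b`. By linearity of the symmetrisation, `P_{λ*} - t P_λ` symmetrises
`f = x^μ (x_b - t x_a) ∏_{i<j} (x_i - t x_j)/(x_i - x_j)`. Since `a` and `b` are adjacent,
the transposition `(a b)` inverts only the pair `(a, b)` in the product, and
`(x_b - t x_a)(x_a - t x_b)/(x_a - x_b)` is antisymmetric in `x_a, x_b` while `x^μ` is symmetric,
so `(a b) f = -f`. Hence the symmetrisation of `f` equals its own negative, so it vanishes.
-/

theorem swap_lt_swap_iff_of_covBy {α : Type*} [LinearOrder α] {a b i j : α} (hab : a ⋖ b)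
    (hij : (i, j) ≠ (a, b)) (hji : (i, j) ≠ (b, a)) :
    Equiv.swap a b i < Equiv.swap a b j ↔ i < j := by
  have hlt := hab.lt
  have hge : ∀ c, a < c → b ≤ c := fun c => hab.ge_of_gt
  have hle : ∀ c, c < b → c ≤ a := fun c => hab.le_of_lt
  simp only [ne_eq, Prod.mk.injEq, not_and] at hij hji
  rw [Equiv.swap_apply_def, Equiv.swap_apply_def]
  split_ifs <;> subst_vars <;> grind

theorem prod_Ioi_comp_swap_mul {α M : Type*} [LinearOrder α] [Fintype α]
    [LocallyFiniteOrderTop α] [CommMonoid M] {a b : α} (hab : a ⋖ b) (g : α → α → M) :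
    (∏ i, ∏ j ∈ Ioi i, g (Equiv.swap a b i) (Equiv.swap a b j)) * g a b
      = g b a * ∏ i, ∏ j ∈ Ioi i, g i j := by
  set s := Equiv.swap a b
  set P := (univ.filter fun p : α × α => p.1 < p.2)
  have hP (h : α × α → M) : ∏ i, ∏ j ∈ Ioi i, h (i, j) = ∏ p ∈ P, h p :=
    (prod_finset_product' P univ (fun i => Ioi i) (by simp [P])).symm
  have hab' : (a, b) ∈ P := by simp [P, hab.lt]
  have hinv (p : α × α) : p ∈ P.erase (a, b) ↔ s.prodCongr s p ∈ P.erase (a, b) := by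
    obtain ⟨i, j⟩ := p
    by_cases hji : (i, j) = (b, a)
    · simp_all [P, s, hab.lt.not_gt]
    by_cases hij : (i, j) = (a, b)
    · simp_all [P, s, hab.lt.le]
    have : (s i, s j) ≠ (a, b) := by
      simpa [s, Equiv.swap_apply_eq_iff, and_comm] using hji
    simp_all [P, s, swap_lt_swap_iff_of_covBy hab hij hji]
  have hrest : ∏ p ∈ P.erase (a, b), g (s p.1) (s p.2) = ∏ p ∈ P.erase (a, b), g p.1 p.2 :=
    prod_equiv (s.prodCongr s) hinv fun _ _ => rfl
  rw [hP fun p => g (s p.1) (s p.2), hP fun p => g p.1 p.2, ← mul_prod_erase P _ hab',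
    ← mul_prod_erase P _ hab', hrest]
  simp only [s, Equiv.swap_apply_left, Equiv.swap_apply_right]
  rw [mul_right_comm, mul_assoc]

theorem sum_apply_eq_zero_of_apply_eq_neg {G M H : Type*} [Group G] [Fintype G] [AddCommGroup M]
    [IsAddTorsionFree M] [FunLike H M M] [AddMonoidHomClass H M M] (ρ : G → H)
    (hρ : ∀ g h z, ρ g (ρ h z) = ρ (g * h) z) {s : G} {f : M} (hf : ρ s f = -f) :
    ∑ g, ρ g f = 0 := by
  refine self_eq_neg.mp ?_
  calc ∑ g, ρ g f = ∑ g, ρ (g * s) f :=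
        (Fintype.sum_equiv (Equiv.mulRight s) _ _ fun _ => rfl).symm
    _ = -∑ g, ρ g f := by simp_rw [← hρ, hf, map_neg, sum_neg_distrib]

theorem prod_pow_update_add_one {ι M : Type*} [Fintype ι] [DecidableEq ι] [CommMonoid M]
    (x : ι → M) (μ : ι → ℕ) (a : ι) :
    ∏ j, x j ^ update μ a (μ a + 1) j = (∏ j, x j ^ μ j) * x a := by
  simp_rw [apply_update (fun j k => x j ^ k), prod_update_of_mem (mem_univ a),
    ← mul_prod_erase univ (fun j => x j ^ μ j) (mem_univ a), sdiff_singleton_eq_erase, pow_succ]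
  exact mul_right_comm _ _ _

theorem comp_swap_eq_self {α β : Type*} [DecidableEq α] {μ : α → β} {a b : α}
    (h : μ a = μ b) :
    μ ∘ Equiv.swap a b = μ := by
  rw [Equiv.comp_swap_eq_update, h, update_eq_self, ← h, update_eq_self]

section HallLittlewood

variable (n : ℕ)

theorem pact12_algebraMap (σ : Equiv.Perm (Fin n)) (r : R12 n) :
    pact12 n σ (algebraMap (R12 n) (F12 n) r)
      = algebraMap (R12 n) (F12 n) (rename (Equiv.optionCongr σ) r) :=
  IsFractionRing.lift_algebraMap _ _

theorem pact12_t12 (σ : Equiv.Perm (Fin n)) : pact12 n σ (t12 n) = t12 n := by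
  rw [t12, pact12_algebraMap, rename_X]
  rfl

theorem pact12_x12 (σ : Equiv.Perm (Fin n)) (j : Fin n) :
    pact12 n σ (x12 n j) = x12 n (σ j) := by
  rw [x12, pact12_algebraMap, rename_X]
  rfl

theorem pact12_pact12 (σ τ : Equiv.Perm (Fin n)) (z : F12 n) :
    pact12 n σ (pact12 n τ z) = pact12 n (σ * τ) z := by
  suffices (pact12 n σ).comp (pact12 n τ) = pact12 n (σ * τ) from DFunLike.congr_fun this z
  refine IsLocalization.ringHom_ext (nonZeroDivisors (R12 n)) (MvPolynomial.ringHom_ext ?_ ?_)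
  · simp [pact12_algebraMap]
  · rintro (_ | _) <;> simp [pact12_algebraMap]

theorem pact12_prod_pow_of_comp_eq {σ : Equiv.Perm (Fin n)} {μ : Fin n → ℕ}
    (h : μ ∘ σ = μ) :
    pact12 n σ (∏ j, x12 n j ^ μ j) = ∏ j, x12 n j ^ μ j := by
  simp_rw [map_prod, map_pow, pact12_x12]
  exact Fintype.prod_equiv σ _ _ fun j => by rw [← congr_fun h j, comp_apply]

theorem x12_sub_x12_ne_zero {a b : Fin n} (hab : a ≠ b) : x12 n a - x12 n b ≠ 0 := by
  rw [x12, x12, ← map_sub, ne_eq, IsFractionRing.to_map_eq_zero_iff, sub_eq_zero]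
  exact fun h => hab (Option.some_injective _ (X_injective h))

theorem x12_sub_t12_mul_ne_zero (a b : Fin n) : x12 n a - t12 n * x12 n b ≠ 0 := by
  rw [x12, x12, t12, ← map_mul, ← map_sub, ne_eq, IsFractionRing.to_map_eq_zero_iff]
  intro h
  simpa using congrArg (MvPolynomial.eval fun v => if v = some a then (1 : ℚ) else 0) h

def hlRatio12 (i j : Fin n) : F12 n := (x12 n i - t12 n * x12 n j) / (x12 n i - x12 n j)

theorem pact12_hlRatio12 (σ : Equiv.Perm (Fin n)) (i j : Fin n) :
    pact12 n σ (hlRatio12 n i j) = hlRatio12 n (σ i) (σ j) := by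
  simp only [hlRatio12, map_div₀, map_sub, map_mul, pact12_x12, pact12_t12]

theorem hlRatio12_ne_zero {i j : Fin n} (hij : i ≠ j) : hlRatio12 n i j ≠ 0 :=
  div_ne_zero (x12_sub_t12_mul_ne_zero n i j) (x12_sub_x12_ne_zero n hij)

theorem mul_hlRatio12_swap_eq_neg (a b : Fin n) :
    (x12 n a - t12 n * x12 n b) * hlRatio12 n b a
      = -((x12 n b - t12 n * x12 n a) * hlRatio12 n a b) := by
  rw [hlRatio12, hlRatio12, ← neg_sub (x12 n a), div_neg, mul_neg, neg_inj, mul_div_assoc',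
    mul_div_assoc', mul_comm]

theorem HL12_update_add_one_of_covBy {a b : Fin n} (hab : a ⋖ b) {μ : Fin n → ℕ}
    (hμ : μ a = μ b) :
    HL12 n (update μ b (μ b + 1)) = t12 n * HL12 n (update μ a (μ a + 1)) := by
  set s := Equiv.swap a b
  set A := ∏ j, x12 n j ^ μ j
  set D := ∏ i, ∏ j ∈ Ioi i, hlRatio12 n i j
  have hsA : pact12 n s A = A := pact12_prod_pow_of_comp_eq n (comp_swap_eq_self hμ)
  have hsD : pact12 n s D * hlRatio12 n a b = hlRatio12 n b a * D := by
    simp_rw [D, map_prod, pact12_hlRatio12]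
    exact prod_Ioi_comp_swap_mul hab _
  have hsf : pact12 n s (A * (x12 n b - t12 n * x12 n a) * D)
      = -(A * (x12 n b - t12 n * x12 n a) * D) := by
    refine mul_right_cancel₀ (hlRatio12_ne_zero n hab.ne) ?_
    simp only [map_mul, map_sub, hsA, pact12_x12, pact12_t12, s, Equiv.swap_apply_left,
      Equiv.swap_apply_right]
    linear_combination A * (x12 n a - t12 n * x12 n b) * hsD
      + A * D * mul_hlRatio12_swap_eq_neg n a b
  have hHL (ν : Fin n → ℕ) : HL12 n ν = ∑ σ, pact12 n σ ((∏ j, x12 n j ^ ν j) * D) :=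
    rfl
  rw [← sub_eq_zero, ← sum_apply_eq_zero_of_apply_eq_neg (pact12 n) (pact12_pact12 n) hsf, hHL,
    hHL, mul_sum, ← sum_sub_distrib]
  refine sum_congr rfl fun σ _ => ?_
  simp only [prod_pow_update_add_one, map_mul, map_sub, pact12_t12]
  ring

end HallLittlewood

/-- **Shift identity.** If `λ` is a tuple of nonnegative integers with
`λ_i = λ_{i+1} + 1`, and `λ*` is obtained from `λ` by replacing
`(λ_i, λ_{i+1})` with `(λ_i - 1, λ_{i+1} + 1)`, then `P_{λ*}(x;t) = t ⬝ P_λ(x;t)`. -/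
theorem hall_littlewood_shift (n : ℕ) (lam : Fin n → ℕ) (i : ℕ) (hi : i + 1 < n)
    (h : lam ⟨i, by omega⟩ = lam ⟨i + 1, hi⟩ + 1) :
    HL12 n (Function.update (Function.update lam ⟨i, by omega⟩ (lam ⟨i, by omega⟩ - 1))
        ⟨i + 1, hi⟩ (lam ⟨i + 1, hi⟩ + 1)) =
      t12 n * HL12 n lam := by
  set a : Fin n := ⟨i, by omega⟩
  set b : Fin n := ⟨i + 1, hi⟩
  have hab : a ⋖ b := Fin.covBy_iff.mpr (Order.covBy_add_one i)
  set μ := update lam a (lam b)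
  have hμa : μ a = lam b := update_self ..
  have hμb : μ b = lam b := update_of_ne hab.ne' ..
  have hstar : update (update lam a (lam a - 1)) b (lam b + 1) = update μ b (μ b + 1) := by
    rw [hμb, h, Nat.add_sub_cancel]
  have hlam : lam = update μ a (μ a + 1) := by
    rw [hμa, update_idem, ← h, update_eq_self]
  rw [hstar, hlam]
  exact HL12_update_add_one_of_covBy n hab (hμa.trans hμb.symm)

end
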